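/- Suppose x = u₀q^{σ₁}u₁q^{σ₂}⋯q^{σ_k}u_k and y = v₀q^{ε₁}v₁q^{ε₂}⋯q^{ε_ℓ}v_ℓ, where the u_i and v_i are words on X, σ_i, ε_i ∈ {±1}, and both words are freely and cyclically reduced. If x ≈ y in the Miller Machine M(G), then k = ℓ and σ_i = ε_i for all i = 1,…,k. -/

import Mathlib

/-!
Common setup: a finitely presented group `G = ⟨X ∣ R⟩` (`X` a finite set, `R` a finite
nonempty set of words of the free group `F(X)`) and its Miller machine `M(G)`,
the group generated by `X ∪ Θ ∪ {q}`, where `Θ = {θ_α : α ∈ X ∪ R}`, subject to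
the relations `θ_α x = x θ_α` (`x ∈ X`, `α ∈ X ∪ R`), `θ_x x q = q x θ_x` (`x ∈ X`)
and `θ_r q = q r θ_r` (`r ∈ R`).
-/

namespace Miller

noncomputable section

/-- Index type for the letters `Θ`: one letter `θ_α` for each `α ∈ X ∪ R`
(since `X ∩ R = ∅`, the disjoint sum is faithful). -/
abbrev ThIdx (X : Type) (R : Finset (FreeGroup X)) : Type := X ⊕ {r : FreeGroup X // r ∈ R}

/-- The generators of the Miller machine: the letters of `X`, the letters `Θ`, and `q`. -/
abbrev Gen (X : Type) (R : Finset (FreeGroup X)) : Type := X ⊕ (ThIdx X R ⊕ Unit)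

variable (X : Type) (R : Finset (FreeGroup X))

/-- The letter `x ∈ X`, as a word on the generators of `M(G)`. -/
def xg (x : X) : FreeGroup (Gen X R) := FreeGroup.of (Sum.inl x)

/-- The letter `θ_α`, as a word on the generators of `M(G)`. -/
def θg (a : ThIdx X R) : FreeGroup (Gen X R) := FreeGroup.of (Sum.inr (Sum.inl a))

/-- The letter `q`, as a word on the generators of `M(G)`. -/
def qg : FreeGroup (Gen X R) := FreeGroup.of (Sum.inr (Sum.inr ()))

/-- A word on `X` is in particular a word on the generators of `M(G)`. -/
def ofX : FreeGroup X →* FreeGroup (Gen X R) := FreeGroup.map Sum.inl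

/-- The defining relators of the Miller machine `M(G)`. -/
def rels : Set (FreeGroup (Gen X R)) :=
  {w | (∃ (a : ThIdx X R) (x : X),
          w = θg X R a * xg X R x * (xg X R x * θg X R a)⁻¹) ∨
       (∃ x : X,
          w = θg X R (Sum.inl x) * xg X R x * qg X R *
              (qg X R * xg X R x * θg X R (Sum.inl x))⁻¹) ∨
       (∃ r : {r : FreeGroup X // r ∈ R},
          w = θg X R (Sum.inr r) * qg X R *
              (qg X R * ofX X R r.1 * θg X R (Sum.inr r))⁻¹)}

/-- The group `G = ⟨X ∣ R⟩`. -/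
abbrev G := PresentedGroup (R : Set (FreeGroup X))

/-- The Miller machine `M(G)`. -/
abbrev M := PresentedGroup (rels X R)

/-- The element of `G` represented by a word on `X`. -/
def toG : FreeGroup X →* G X R := PresentedGroup.mk _

/-- The element of `M(G)` represented by a word on the generators. -/
def toM : FreeGroup (Gen X R) →* M X R := PresentedGroup.mk _

/-- The element of `M(G)` represented by a word on `X`. -/
def embX : FreeGroup X →* M X R := (toM X R).comp (ofX X R)

/-- The element of `M(G)` represented by a word on `Θ`. -/
def embTh : FreeGroup (ThIdx X R) →* M X R :=
  (toM X R).comp (FreeGroup.map fun a => Sum.inr (Sum.inl a))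

/-- The generator `x ∈ X` as element of `M(G)`. -/
def xM (x : X) : M X R := toM X R (xg X R x)

/-- The generator `θ_α` as element of `M(G)`. -/
def θM (a : ThIdx X R) : M X R := toM X R (θg X R a)

/-- The generator `q` as element of `M(G)`. -/
def qM : M X R := toM X R (qg X R)

/-- The subgroup `⟨X, q⟩` of `M(G)`. -/
def XqSub : Subgroup (M X R) := Subgroup.closure (Set.range (xM X R) ∪ {qM X R})

/-- The subgroup `⟨Θ⟩` of `M(G)`. -/
def ThSub : Subgroup (M X R) := Subgroup.closure (Set.range (θM X R))

/-- The subgroup `H = ⟨X ∪ Θ⟩` of `M(G)`. -/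
def Hgrp : Subgroup (M X R) := Subgroup.closure (Set.range (xM X R) ∪ Set.range (θM X R))

/-- The subgroup `K₋₁ = ⟨{θ_x x : x ∈ X} ∪ {θ_r : r ∈ R}⟩` of `M(G)`. -/
def Kneg : Subgroup (M X R) := Subgroup.closure
  ((Set.range fun x : X => θM X R (Sum.inl x) * xM X R x) ∪
   (Set.range fun r : {r : FreeGroup X // r ∈ R} => θM X R (Sum.inr r)))

/-- The subgroup `K₁ = ⟨{θ_x x : x ∈ X} ∪ {θ_r r : r ∈ R}⟩` of `M(G)`. -/
def Kpos : Subgroup (M X R) := Subgroup.closure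
  ((Set.range fun x : X => θM X R (Sum.inl x) * xM X R x) ∪
   (Set.range fun r : {r : FreeGroup X // r ∈ R} => θM X R (Sum.inr r) * embX X R r.1))

/-- `‖g‖`: the (reduced) word length of an element of a free group. -/
def wlen {β : Type} (g : FreeGroup β) : ℕ :=
  sInf {n | ∃ l : List (β × Bool), FreeGroup.mk l = g ∧ l.length = n}

/-- `|g|`: word length in `M(G)` with respect to the generating set `X ∪ Θ ∪ {q}`. -/
def mlen (g : M X R) : ℕ :=
  sInf {n | ∃ w : FreeGroup (Gen X R), toM X R w = g ∧ wlen w = n}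

/-- `c(u,v)`: the minimal length of a conjugator taking `u` to `v` in `M(G)`. -/
def c (u v : M X R) : ℕ :=
  sInf {n | ∃ γ : M X R, γ * u * γ⁻¹ = v ∧ mlen X R γ = n}

/-- `c'(u,v)`: the minimal length of a conjugator in `⟨X ∪ Θ⟩` taking `u` to `v`. -/
def c' (u v : M X R) : ℕ :=
  sInf {n | ∃ γ ∈ Hgrp X R, γ * u * γ⁻¹ = v ∧ mlen X R γ = n}

/-- The product `∏_{i<m} w_i r_i w_i⁻¹`. -/
def prodConj (m : ℕ) (w r : ℕ → FreeGroup X) : FreeGroup X :=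
  ((List.range m).map fun i => w i * r i * (w i)⁻¹).prod

/-- `r_0, …, r_{m-1} ∈ R^{±1}`. -/
def IsRelSeq (m : ℕ) (r : ℕ → FreeGroup X) : Prop := ∀ i < m, r i ∈ R ∨ (r i)⁻¹ ∈ R

/-- `δ(g)`: the least `m` such that `g` is freely equal to a product of `m`
conjugates of elements of `R^{±1}`. -/
def area (g : FreeGroup X) : ℕ :=
  sInf {m | ∃ w r : ℕ → FreeGroup X, IsRelSeq X R m r ∧ g = prodConj X m w r}

/-- The Dehn function `Δ` of the presentation `⟨X ∣ R⟩`. -/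
def Dehn (n : ℕ) : ℕ :=
  sSup {d | ∃ g : FreeGroup X, wlen g ≤ n ∧ toG X R g = 1 ∧ area X R g = d}

/-- `f(w) = m + ‖w₁‖ + ‖w_m‖ + ∑_{i=1}^{m-1} ‖w_i⁻¹ w_{i+1}‖` (with `0`-based indexing). -/
def fval (m : ℕ) (w : ℕ → FreeGroup X) : ℕ :=
  m + wlen (w 0) + wlen (w (m - 1)) + ∑ i ∈ Finset.range (m - 1), wlen ((w i)⁻¹ * w (i + 1))

/-- `λ(g)`: the minimum of `f(w)` over expressions `w = ∏ w_i r_i w_i⁻¹` freely equal to `g`. -/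
def lam (g : FreeGroup X) : ℕ :=
  sInf {n | ∃ (m : ℕ) (w r : ℕ → FreeGroup X),
    1 ≤ m ∧ IsRelSeq X R m r ∧ g = prodConj X m w r ∧ fval X m w = n}

/-- `Λ(n)`: the maximum of `λ(g)` over words `g` with `g =_G 1` and `‖g‖ ≤ n`. -/
def Lam (n : ℕ) : ℕ :=
  sSup {d | ∃ g : FreeGroup X, wlen g ≤ n ∧ toG X R g = 1 ∧ lam X R g = d}

/-- `t = max({‖r‖ : r ∈ R} ∪ {2})`. -/
def t : ℕ := max (R.sup fun r => wlen r) 2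

/-- `w, ε` witness the iso-computational list conjugacy `u ∼^σ v` (indices `0,…,k-1`,
with the convention that the index after `k-1` is `0`, i.e. `σ_{k+1} = σ₁`). -/
def IsICLCWitness (k : ℕ) (σ : ℕ → ℤ) (u v : ℕ → FreeGroup X) (w ε : FreeGroup X) : Prop :=
  toG X R ε = 1 ∧ ∀ i < k,
    (σ i = 1 ∧ σ ((i + 1) % k) = 1 → w * ε * u i * w⁻¹ = v i) ∧
    (σ i = 1 ∧ σ ((i + 1) % k) = -1 → w * ε * u i * ε⁻¹ * w⁻¹ = v i) ∧
    (σ i = -1 ∧ σ ((i + 1) % k) = 1 → w * u i * w⁻¹ = v i) ∧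
    (σ i = -1 ∧ σ ((i + 1) % k) = -1 → w * u i * ε⁻¹ * w⁻¹ = v i)

/-- Iso-computational list conjugacy `u ∼^σ v`. -/
def ICLC (k : ℕ) (σ : ℕ → ℤ) (u v : ℕ → FreeGroup X) : Prop :=
  ∃ w ε : FreeGroup X, IsICLCWitness X R k σ u v w ε

/-- `c_{k,σ}(u,v)`: the least `‖w‖` over witnessing pairs `(w, ε)` for `u ∼^σ v`. -/
def cList (k : ℕ) (σ : ℕ → ℤ) (u v : ℕ → FreeGroup X) : ℕ :=
  sInf {n | ∃ w ε : FreeGroup X, IsICLCWitness X R k σ u v w ε ∧ wlen w = n}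

/-- `C_{k,σ}(n)`. -/
def CC (k : ℕ) (σ : ℕ → ℤ) (n : ℕ) : ℕ :=
  sSup {d | ∃ u v : ℕ → FreeGroup X, ICLC X R k σ u v ∧
    (∑ i ∈ Finset.range k, (wlen (u i) + wlen (v i))) ≤ n - 2 * k ∧
    cList X R k σ u v = d}

/-- The alphabet `X ∪ {q}`. -/
abbrev Yt (X : Type) : Type := X ⊕ Unit

/-- The letter `q` in the free group `F(X ∪ {q})`. -/
def qY : FreeGroup (Yt X) := FreeGroup.of (Sum.inr ())

/-- A word on `X` as a word on `X ∪ {q}`. -/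
def embY : FreeGroup X →* FreeGroup (Yt X) := FreeGroup.map Sum.inl

/-- The element of `M(G)` represented by a word on `X ∪ {q}`. -/
def toMY : FreeGroup (Yt X) →* M X R :=
  (toM X R).comp (FreeGroup.map (Sum.elim Sum.inl fun u => Sum.inr (Sum.inr u)))

/-- The word `q^{σ₁}u₁q^{σ₂}u₂⋯q^{σ_k}u_k` on `X ∪ {q}` (`0`-based indexing). -/
def qword (k : ℕ) (σ : ℕ → ℤ) (u : ℕ → FreeGroup X) : FreeGroup (Yt X) :=
  ((List.range k).map fun i => qY X ^ σ i * embY X (u i)).prod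

/-- The word `q^{σ₁}u₁q^{σ₂}u₂⋯q^{σ_k}u_k` is (freely) reduced, expressed as:
its reduced length equals the sum of the lengths of its letters. -/
def ReducedForm (k : ℕ) (σ : ℕ → ℤ) (u : ℕ → FreeGroup X) : Prop :=
  wlen (qword X k σ u) = k + ∑ i ∈ Finset.range k, wlen (u i)

/-- The element `q^{σ₁}u₁q^{σ₂}u₂⋯q^{σ_k}u_k` of `M(G)`. -/
def qwordM (k : ℕ) (σ : ℕ → ℤ) (u : ℕ → FreeGroup X) : M X R :=
  toMY X R (qword X k σ u)

/-- `σ` is a tuple of signs `±1`. -/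
def IsSgn (k : ℕ) (σ : ℕ → ℤ) : Prop := ∀ i < k, σ i = 1 ∨ σ i = -1

/-- `D_{k,σ}(n)`: restriction of the conjugator length function of `M(G)` to conjugate
pairs `x = q^{σ₁}u₁⋯q^{σ_k}u_k`, `y = q^{σ₁}v₁⋯q^{σ_k}v_k` that are reduced words with
`∑ (‖u_i‖ + ‖v_i‖) ≤ n - 2k`. -/
def Dk (k : ℕ) (σ : ℕ → ℤ) (n : ℕ) : ℕ :=
  sSup {d | ∃ u v : ℕ → FreeGroup X,
    ReducedForm X k σ u ∧ ReducedForm X k σ v ∧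
    IsConj (qwordM X R k σ u) (qwordM X R k σ v) ∧
    (∑ i ∈ Finset.range k, (wlen (u i) + wlen (v i))) ≤ n - 2 * k ∧
    c X R (qwordM X R k σ u) (qwordM X R k σ v) = d}

/-- `D'_{k,σ}(n)`: as `D_{k,σ}(n)`, but for pairs conjugate via an element of `⟨X ∪ Θ⟩`
and with minimal conjugator length measured over conjugators in `⟨X ∪ Θ⟩`. -/
def Dk' (k : ℕ) (σ : ℕ → ℤ) (n : ℕ) : ℕ :=
  sSup {d | ∃ u v : ℕ → FreeGroup X,
    ReducedForm X k σ u ∧ ReducedForm X k σ v ∧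
    (∃ γ ∈ Hgrp X R, γ * qwordM X R k σ u * γ⁻¹ = qwordM X R k σ v) ∧
    (∑ i ∈ Finset.range k, (wlen (u i) + wlen (v i))) ≤ n - 2 * k ∧
    c' X R (qwordM X R k σ u) (qwordM X R k σ v) = d}

/-- `D₀(n)`: restriction of the conjugator length function of `M(G)` to pairs
`(qu, q)` with `u` a word on `X`, `qu` conjugate to `q`, and `‖u‖ ≤ n - 2`. -/
def D0 (n : ℕ) : ℕ :=
  sSup {d | ∃ u : FreeGroup X, wlen u ≤ n - 2 ∧
    IsConj (qM X R * embX X R u) (qM X R) ∧ c X R (qM X R * embX X R u) (qM X R) = d}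

/-- `D'₀(n)`: as `D₀(n)`, via conjugators in `⟨X ∪ Θ⟩`. -/
def D0' (n : ℕ) : ℕ :=
  sSup {d | ∃ u : FreeGroup X, wlen u ≤ n - 2 ∧
    (∃ γ ∈ Hgrp X R, γ * (qM X R * embX X R u) * γ⁻¹ = qM X R) ∧
    c' X R (qM X R * embX X R u) (qM X R) = d}

/-- The endomorphism `φ_α` of `F(X ∪ {q})`: it fixes each `x ∈ X` and sends `q` to
`α⁻¹qα` if `α ∈ X` and to `qα` if `α ∈ R`. -/
def phi (a : ThIdx X R) : FreeGroup (Yt X) →* FreeGroup (Yt X) :=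
  FreeGroup.lift fun s =>
    match s with
    | Sum.inl x => FreeGroup.of (Sum.inl x : Yt X)
    | Sum.inr _ =>
      match a with
      | Sum.inl x' => (FreeGroup.of (Sum.inl x' : Yt X))⁻¹ * qY X * FreeGroup.of (Sum.inl x')
      | Sum.inr r => qY X * embY X r.1

end

end Miller

namespace Miller

/-- A reduced word in a free group is cyclically reduced iff squaring doubles its
length. -/
def CyclRed {β : Type} (g : FreeGroup β) : Prop := wlen (g * g) = 2 * wlen g

end Miller

/-!
The action of `θ_α` on `⟨X, q⟩` in `M(G)` fixes `X` and sends `q` to `p q s` for words `p, s`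
on `X` (`θ_x`: `q ↦ x⁻¹ q x`, `θ_r`: `q ↦ q r`). Hence `M(G)` maps to the semidirect product of
`F(X ∪ {q})` by these automorphisms, injectively on `⟨X, q⟩`, and `x ≈ y` becomes an identity
`y = g · φ(x) · g⁻¹` in the free group `F(X ∪ {q})`, with `g` a word on `X` and `φ` fixing `X`
and sending `q ↦ p q s`.

The invariant is the `q`-skeleton: the sequence of signs of the `q`-letters in the freely
reduced word. Multiplying by words on `X` does not change it. Since `x` is reduced, `u i ≠ 1`
whenever `σ i ≠ σ (i+1)`; `φ` replaces such a `u i` by a conjugate `s u i s⁻¹` or `p⁻¹ u i p`,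
still nontrivial, so no `q`-letters cancel in `φ(x)` and its skeleton is still `σ`. The
skeleton of `y` is `τ`, so `σ = τ`.
-/

open FreeGroup hiding map_one map_mul map_inv

namespace Miller

section ReducedWords

variable {α β : Type} [DecidableEq α] [DecidableEq β]

theorem wlen_eq_norm (w : FreeGroup α) : wlen w = w.norm := by
  refine le_antisymm (Nat.sInf_le ⟨w.toWord, mk_toWord, rfl⟩)
    (le_csInf ⟨_, w.toWord, mk_toWord, rfl⟩ ?_)
  rintro n ⟨L, rfl, rfl⟩
  exact norm_mk_le

theorem toWord_mk_of_isReduced {L : List (α × Bool)} (h : IsReduced L) : (mk L).toWord = L := by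
  rw [toWord_mk, h.reduce_eq]

theorem isReduced_of_norm_mk {L : List (α × Bool)} (h : (mk L).norm = L.length) :
    IsReduced L := by
  refine isReduced_iff_reduce_eq.2 (reduce.red.sublist.eq_of_length ?_)
  rw [← toWord_mk]
  exact h

theorem toWord_map {f : α → β} (hf : f.Injective) (w : FreeGroup α) :
    (map f w).toWord = w.toWord.map fun a => (f a.1, a.2) := by
  rw [← mk_toWord (x := w), map.mk, toWord_mk_of_isReduced, toWord_mk, reduce_toWord]
  exact (List.isChain_map _).2 (isReduced_toWord.imp fun _ _ h hab => h (hf hab))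

end ReducedWords

section Skeleton

variable {X : Type}

def qLetter (b : Bool) : Yt X × Bool := (Sum.inr (), b)

def qskel (L : List (Yt X × Bool)) : List Bool :=
  (L.filter fun a => a.1.isRight).map Prod.snd

@[simp]
theorem qskel_append (L M : List (Yt X × Bool)) : qskel (L ++ M) = qskel L ++ qskel M := by
  simp [qskel]

theorem embY_of (x : X) : embY X (FreeGroup.of x) = FreeGroup.of (Sum.inl x) := FreeGroup.map.of

theorem mk_qLetter {n : ℤ} (hn : n = 1 ∨ n = -1) :
    mk [qLetter (X := X) (decide (n = 1))] = qY X ^ n := by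
  rcases hn with rfl | rfl <;> rfl

variable [DecidableEq X]

def qsk (w : FreeGroup (Yt X)) : List Bool := qskel w.toWord

theorem toWord_embY (c : FreeGroup X) :
    (embY X c).toWord = c.toWord.map fun a => (Sum.inl a.1, a.2) :=
  toWord_map Sum.inl_injective c

theorem norm_embY (c : FreeGroup X) : (embY X c).norm = c.norm := by
  rw [FreeGroup.norm, FreeGroup.norm, toWord_embY, List.length_map]

theorem isLeft_of_mem_toWord_embY {c : FreeGroup X} {a : Yt X × Bool}
    (ha : a ∈ (embY X c).toWord) : a.1.isLeft := by
  rw [toWord_embY] at ha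
  obtain ⟨b, -, rfl⟩ := List.mem_map.1 ha
  rfl

@[simp]
theorem qskel_toWord_embY (c : FreeGroup X) : qskel (embY X c).toWord = [] := by
  simp [qskel, toWord_embY]

theorem qsk_mk_inl_mul (x : X) (b : Bool) (w : FreeGroup (Yt X)) :
    qsk (mk [(Sum.inl x, b)] * w) = qsk w := by
  rw [qsk, qsk, toWord_mul, toWord_mk, reduce_singleton, List.singleton_append, reduce.cons,
    reduce_toWord]
  rcases w.toWord with _ | ⟨⟨y, b'⟩, L⟩
  · simp [qskel]
  · by_cases h : Sum.inl x = y ∧ b = !b'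
    · obtain ⟨rfl, hb⟩ := h
      simp [hb, qskel]
    · simp [h, qskel]

theorem qsk_embY_mul (c : FreeGroup X) (w : FreeGroup (Yt X)) : qsk (embY X c * w) = qsk w := by
  induction c using FreeGroup.induction_on generalizing w with
  | C1 => rw [map_one, one_mul]
  | of x => exact qsk_mk_inl_mul x true w
  | inv_of x _ => exact qsk_mk_inl_mul x false w
  | mul c d hc hd => rw [map_mul, mul_assoc, hc, hd]

theorem qsk_inv (w : FreeGroup (Yt X)) : qsk w⁻¹ = ((qsk w).map not).reverse := by
  simp [qsk, qskel, toWord_inv, invRev, List.filter_reverse, List.filter_map, Function.comp_def]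

theorem qsk_mul_embY (w : FreeGroup (Yt X)) (c : FreeGroup X) : qsk (w * embY X c) = qsk w := by
  have h : qsk (w * embY X c)⁻¹ = qsk w⁻¹ := by
    rw [mul_inv_rev, ← map_inv, qsk_embY_mul]
  rw [qsk_inv, qsk_inv, List.reverse_inj] at h
  exact List.map_injective_iff.2 Bool.not_injective h

theorem qsk_conj_embY (g : FreeGroup X) (w : FreeGroup (Yt X)) :
    qsk (embY X g * w * (embY X g)⁻¹) = qsk w := by
  rw [← map_inv, qsk_mul_embY, qsk_embY_mul]

end Skeleton

section QWord

variable {X : Type} [DecidableEq X] {k : ℕ} {σ : ℕ → ℤ} {u : ℕ → FreeGroup X}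

theorem decide_eq_decide_iff_of_sign {m n : ℤ} (hm : m = 1 ∨ m = -1) (hn : n = 1 ∨ n = -1) :
    decide (m = 1) = decide (n = 1) ↔ m = n := by
  rcases hm with rfl | rfl <;> rcases hn with rfl | rfl <;> decide

def qwordList (k : ℕ) (σ : ℕ → ℤ) (u : ℕ → FreeGroup X) : List (Yt X × Bool) :=
  (List.range k).flatMap fun i => qLetter (decide (σ i = 1)) :: (embY X (u i)).toWord

theorem mk_qwordList (hσ : IsSgn k σ) : mk (qwordList k σ u) = qword X k σ u := by
  induction k with
  | zero => rfl
  | succ k ih =>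
    rw [qwordList, qword, List.range_succ, List.flatMap_append, List.map_append, List.prod_append,
      ← qwordList, ← qword, ← ih fun i hi => hσ i (by omega), ← mul_mk]
    simp only [List.flatMap_cons, List.flatMap_nil, List.append_nil, List.map_cons, List.map_nil,
      List.prod_cons, List.prod_nil, mul_one]
    rw [← List.singleton_append, ← mul_mk, mk_qLetter (hσ k (by omega)), mk_toWord]

theorem length_qwordList : (qwordList k σ u).length = k + ∑ i ∈ Finset.range k, (u i).norm := by
  induction k with
  | zero => rfl
  | succ k ih =>
    rw [qwordList, List.range_succ, List.flatMap_append, List.length_append, ← qwordList, ih,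
      Finset.sum_range_succ]
    simp only [List.flatMap_cons, List.flatMap_nil, List.append_nil, List.length_cons]
    rw [← FreeGroup.norm, norm_embY]
    ring

theorem qskel_qLetter_cons (b : Bool) (c : FreeGroup X) :
    qskel (qLetter b :: (embY X c).toWord) = [b] := by
  rw [← List.singleton_append, qskel_append, qskel_toWord_embY, List.append_nil]
  rfl

theorem qskel_qwordList :
    qskel (qwordList k σ u) = (List.range k).map fun i => decide (σ i = 1) := by
  induction k with
  | zero => rfl
  | succ k ih =>
    rw [qwordList, List.range_succ, List.flatMap_append, qskel_append, ← qwordList, ih,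
      List.map_append, List.flatMap_singleton, qskel_qLetter_cons, List.map_singleton]

theorem isReduced_qLetter_cons (b : Bool) (c : FreeGroup X) :
    IsReduced (qLetter b :: (embY X c).toWord) := by
  refine List.isChain_cons.2 ⟨fun a ha h => ?_, isReduced_toWord⟩
  have := isLeft_of_mem_toWord_embY (List.mem_of_mem_head? ha)
  simp [qLetter, ← h] at this

theorem qLetter_junction_iff {b b' : Bool} {c : FreeGroup X} {L : List (Yt X × Bool)} :
    (∀ x ∈ (qLetter b :: (embY X c).toWord).getLast?, ∀ y ∈ (qLetter b' :: L).head?,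
      x.1 = y.1 → x.2 = y.2) ↔ (c = 1 → b = b') := by
  by_cases hc : c = 1
  · subst hc
    simp [qLetter]
  · simp only [hc, false_implies, iff_true, List.getLast?_cons, List.head?_cons,
      Option.mem_def, Option.some.injEq]
    rintro _ rfl _ rfl h
    rcases hz : (embY X c).toWord.getLast? with _ | z
    · simp_all [toWord_embY, toWord_eq_nil_iff]
    · have := isLeft_of_mem_toWord_embY (List.mem_of_getLast? hz)
      simp_all [qLetter]

-- The only possible cancellation is `q^{±1} q^{∓1}` around an empty `u i`.
theorem isReduced_qwordList_iff (hσ : IsSgn k σ) :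
    IsReduced (qwordList k σ u) ↔ ∀ i, i + 1 < k → σ i ≠ σ (i + 1) → u i ≠ 1 := by
  rw [qwordList, List.flatMap_def, FreeGroup.IsReduced, List.isChain_flatten (by simp),
    List.isChain_map, List.isChain_range]
  simp only [List.mem_map, List.mem_range, forall_exists_index, and_imp, forall_apply_eq_imp_iff₂,
    Nat.succ_eq_add_one, qLetter_junction_iff]
  refine (and_iff_right fun i _ => isReduced_qLetter_cons _ _).trans (forall_congr' fun i => ?_)
  refine ⟨fun h hi hne hu => hne ?_, fun h hi hu => ?_⟩
  · exact (decide_eq_decide_iff_of_sign (hσ i (by omega)) (hσ (i + 1) hi)).1 (h (by omega) hu)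
  · rw [decide_eq_decide_iff_of_sign (hσ i (by omega)) (hσ (i + 1) (by omega))]
    by_contra hne
    exact h (by omega) hne hu

theorem isReduced_qwordList_of_wlen (hσ : IsSgn k σ) {u₀ : FreeGroup X}
    (hred : wlen (embY X u₀ * qword X k σ u) =
      wlen u₀ + (k + ∑ i ∈ Finset.range k, wlen (u i))) :
    IsReduced (qwordList k σ u) := by
  have h : IsReduced ((embY X u₀).toWord ++ qwordList k σ u) := by
    refine isReduced_of_norm_mk ?_
    simp only [wlen_eq_norm] at hred
    rw [← mul_mk, mk_toWord, mk_qwordList hσ, hred, List.length_append, length_qwordList,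
      ← FreeGroup.norm, norm_embY]
  exact h.infix (List.suffix_append _ _).isInfix

theorem qsk_qword (hσ : IsSgn k σ) (h : IsReduced (qwordList k σ u)) :
    qsk (qword X k σ u) = (List.range k).map fun i => decide (σ i = 1) := by
  rw [qsk, ← mk_qwordList hσ, toWord_mk_of_isReduced h, qskel_qwordList]

end QWord

section Twist

variable {X : Type}

def twistHom (p s : FreeGroup X) : FreeGroup (Yt X) →* FreeGroup (Yt X) :=
  FreeGroup.lift (Sum.elim (fun x => FreeGroup.of (Sum.inl x)) fun _ => embY X p * qY X * embY X s)

theorem twistHom_embY (p s c : FreeGroup X) : twistHom p s (embY X c) = embY X c := by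
  have : (twistHom p s).comp (embY X) = embY X := FreeGroup.ext_hom _ _ fun x => by
    simp [twistHom, embY]
  exact DFunLike.congr_fun this c

theorem twistHom_of_inl (p s : FreeGroup X) (x : X) :
    twistHom p s (FreeGroup.of (Sum.inl x)) = FreeGroup.of (Sum.inl x) :=
  FreeGroup.lift_apply_of

theorem twistHom_qY (p s : FreeGroup X) : twistHom p s (qY X) = embY X p * qY X * embY X s :=
  FreeGroup.lift_apply_of

theorem twistHom_comp (p s p' s' : FreeGroup X) :
    (twistHom p s).comp (twistHom p' s') = twistHom (p' * p) (s * s') := by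
  refine FreeGroup.ext_hom _ _ fun a => ?_
  rcases a with x | ⟨⟩
  · simp [twistHom]
  · change twistHom p s (twistHom p' s' (qY X)) = twistHom (p' * p) (s * s') (qY X)
    simp only [twistHom_qY, map_mul, twistHom_embY]
    group

theorem twistHom_one : twistHom (1 : FreeGroup X) 1 = MonoidHom.id _ := by
  refine FreeGroup.ext_hom _ _ fun a => ?_
  rcases a with x | ⟨⟩
  · simp [twistHom]
  · change twistHom 1 1 (qY X) = qY X
    simp [twistHom_qY]

def twist : (FreeGroup X)ᵐᵒᵖ × FreeGroup X →* MulAut (FreeGroup (Yt X)) where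
  toFun t := MonoidHom.toMulEquiv (twistHom t.1.unop t.2) (twistHom t.1.unop⁻¹ t.2⁻¹)
    (by rw [twistHom_comp, mul_inv_cancel, inv_mul_cancel, twistHom_one])
    (by rw [twistHom_comp, mul_inv_cancel, inv_mul_cancel, twistHom_one])
  map_one' := MulEquiv.ext fun w => DFunLike.congr_fun twistHom_one w
  map_mul' t t' := MulEquiv.ext fun w => (DFunLike.congr_fun (twistHom_comp _ _ _ _) w).symm

theorem twist_apply (t : (FreeGroup X)ᵐᵒᵖ × FreeGroup X) (w : FreeGroup (Yt X)) :
    twist t w = twistHom t.1.unop t.2 w := rfl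

def qLead (p s : FreeGroup X) (n : ℤ) : FreeGroup X := if n = 1 then p else s⁻¹

def qTrail (p s : FreeGroup X) (n : ℤ) : FreeGroup X := if n = 1 then s else p⁻¹

theorem twistHom_qY_zpow (p s : FreeGroup X) {n : ℤ} (hn : n = 1 ∨ n = -1) :
    twistHom p s (qY X ^ n) = embY X (qLead p s n) * qY X ^ n * embY X (qTrail p s n) := by
  rcases hn with rfl | rfl
  · simp [qLead, qTrail, twistHom_qY]
  · simp [qLead, qTrail, twistHom_qY, mul_assoc]

theorem twistHom_qword (p s : FreeGroup X) {k : ℕ} {σ : ℕ → ℤ} (hσ : IsSgn k σ)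
    (u : ℕ → FreeGroup X) :
    twistHom p s (qword X k σ u) =
      embY X (qLead p s (σ 0)) *
        qword X k σ (fun i => qTrail p s (σ i) * u i * qLead p s (σ (i + 1))) *
        (embY X (qLead p s (σ k)))⁻¹ := by
  induction k with
  | zero => simp [qword]
  | succ k ih =>
    simp only [qword, List.range_succ, List.map_append, List.prod_append, List.map_singleton,
      List.prod_singleton, map_mul] at ih ⊢
    rw [ih fun i hi => hσ i (by omega), twistHom_qY_zpow p s (hσ k (by omega)), twistHom_embY]
    group

theorem qTrail_mul_mul_qLead_ne_one (p s : FreeGroup X) {m n : ℤ} (hm : m = 1 ∨ m = -1)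
    (hn : n = 1 ∨ n = -1) (hmn : m ≠ n) {c : FreeGroup X} (hc : c ≠ 1) :
    qTrail p s m * c * qLead p s n ≠ 1 := by
  rcases hm with rfl | rfl <;> rcases hn with rfl | rfl <;>
    simp_all [qLead, qTrail, mul_eq_one_iff_eq_inv]

theorem qsk_twistHom_of_wlen [DecidableEq X] (p s : FreeGroup X) {k : ℕ}
    {σ : ℕ → ℤ} (hσ : IsSgn k σ) {u₀ : FreeGroup X} {u : ℕ → FreeGroup X}
    (hred : wlen (embY X u₀ * qword X k σ u) =
      wlen u₀ + (k + ∑ i ∈ Finset.range k, wlen (u i))) :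
    qsk (twistHom p s (embY X u₀ * qword X k σ u)) =
      (List.range k).map fun i => decide (σ i = 1) := by
  have hu := (isReduced_qwordList_iff hσ).1 (isReduced_qwordList_of_wlen hσ hred)
  rw [map_mul, twistHom_embY, twistHom_qword p s hσ, ← mul_assoc, ← mul_assoc, ← map_mul,
    ← map_inv, qsk_mul_embY, qsk_embY_mul]
  refine qsk_qword hσ ((isReduced_qwordList_iff hσ).2 fun i hi hne => ?_)
  exact qTrail_mul_mul_qLead_ne_one p s (hσ i (by omega)) (hσ (i + 1) hi) hne (hu i hi hne)

end Twist

section MillerAction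

variable (X : Type) (R : Finset (FreeGroup X))

abbrev TwistSD : Type := FreeGroup (Yt X) ⋊[twist] ((FreeGroup X)ᵐᵒᵖ × FreeGroup X)

def thetaTwist : ThIdx X R → (FreeGroup X)ᵐᵒᵖ × FreeGroup X
  | Sum.inl x => (MulOpposite.op (FreeGroup.of x)⁻¹, FreeGroup.of x)
  | Sum.inr r => (1, r.1)

def genImage : Gen X R → TwistSD X
  | Sum.inl x => SemidirectProduct.inl (FreeGroup.of (Sum.inl x))
  | Sum.inr (Sum.inl a) => SemidirectProduct.inr (thetaTwist X R a)
  | Sum.inr (Sum.inr _) => SemidirectProduct.inl (qY X)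

variable {X R}

theorem inr_mul_inl (t : (FreeGroup X)ᵐᵒᵖ × FreeGroup X) (w : FreeGroup (Yt X)) :
    (SemidirectProduct.inr t : TwistSD X) * SemidirectProduct.inl w =
      SemidirectProduct.inl (twistHom t.1.unop t.2 w) * SemidirectProduct.inr t := by
  ext <;> simp [twist_apply]

theorem lift_genImage_ofX (w : FreeGroup X) :
    FreeGroup.lift (genImage X R) (ofX X R w) = SemidirectProduct.inl (embY X w) := by
  have : (FreeGroup.lift (genImage X R)).comp (ofX X R) =
      (SemidirectProduct.inl).comp (embY X) := FreeGroup.ext_hom _ _ fun x => by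
    simp [ofX, embY, genImage]
  exact DFunLike.congr_fun this w

theorem lift_genImage_rels : ∀ w ∈ rels X R, FreeGroup.lift (genImage X R) w = 1 := by
  rintro w (⟨a, x, rfl⟩ | ⟨x, rfl⟩ | ⟨r, rfl⟩) <;>
    rw [map_mul, map_inv, mul_inv_eq_one] <;>
    simp only [map_mul, θg, xg, qg, FreeGroup.lift_apply_of, lift_genImage_ofX, genImage]
  · rw [inr_mul_inl, twistHom_of_inl]
  · rw [mul_assoc, ← map_mul, inr_mul_inl, ← map_mul, map_mul, twistHom_of_inl, twistHom_qY]
    simp only [thetaTwist, MulOpposite.unop_op, map_inv, embY_of]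
    group
  · rw [inr_mul_inl, twistHom_qY, ← map_mul]
    simp [thetaTwist]

variable (X R) in
def millerRep : M X R →* TwistSD X := PresentedGroup.toGroup lift_genImage_rels

theorem millerRep_toMY (w : FreeGroup (Yt X)) :
    millerRep X R (toMY X R w) = SemidirectProduct.inl w := by
  have : (millerRep X R).comp (toMY X R) = SemidirectProduct.inl :=
    FreeGroup.ext_hom _ _ fun a => by rcases a with x | ⟨⟩ <;> rfl
  exact DFunLike.congr_fun this w

theorem left_millerRep_mem_range {γ : M X R} (hγ : γ ∈ Hgrp X R) :
    (millerRep X R γ).left ∈ (embY X).range := by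
  induction hγ using Subgroup.closure_induction with
  | mem γ hγ =>
    rcases hγ with ⟨x, rfl⟩ | ⟨a, rfl⟩
    · exact ⟨FreeGroup.of x, embY_of x⟩
    · exact ⟨1, map_one _⟩
  | one => exact ⟨1, map_one _⟩
  | mul γ δ _ _ hγ hδ =>
    obtain ⟨g, hg⟩ := hγ
    obtain ⟨h, hh⟩ := hδ
    exact ⟨g * h, by simp [← hg, ← hh, twist_apply, twistHom_embY]⟩
  | inv γ _ hγ =>
    obtain ⟨g, hg⟩ := hγ
    exact ⟨g⁻¹, by
      rw [map_inv (millerRep X R), SemidirectProduct.inv_left, ← hg, ← map_inv (embY X),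
        twist_apply, twistHom_embY]⟩

theorem exists_twistHom_conj_of_mem_Hgrp {γ : M X R} (hγ : γ ∈ Hgrp X R)
    {x y : FreeGroup (Yt X)} (h : γ * toMY X R x * γ⁻¹ = toMY X R y) :
    ∃ g p s : FreeGroup X, embY X g * twistHom p s x * (embY X g)⁻¹ = y := by
  obtain ⟨g, hg⟩ := left_millerRep_mem_range hγ
  have hconj := congrArg (millerRep X R) h
  rw [map_mul, map_mul, map_inv, millerRep_toMY, millerRep_toMY,
    ← SemidirectProduct.inl_left_mul_inr_right (millerRep X R γ), ← hg] at hconj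
  set t := (millerRep X R γ).right
  refine ⟨g, t.1.unop, t.2, SemidirectProduct.inl_injective (φ := twist) ?_⟩
  rw [← hconj, map_mul, map_mul, map_inv, ← twist_apply, SemidirectProduct.inl_aut, mul_inv_rev]
  simp only [map_inv]
  group

end MillerAction

end Miller

open Miller in
theorem statement11_general (X : Type) (R : Finset (FreeGroup X))
    (k l : ℕ) (σ τ : ℕ → ℤ) (hσ : IsSgn k σ) (hτ : IsSgn l τ)
    (u₀ v₀ : FreeGroup X) (u v : ℕ → FreeGroup X)
    (hxred : wlen (embY X u₀ * qword X k σ u) =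
      wlen u₀ + (k + ∑ i ∈ Finset.range k, wlen (u i)))
    (hyred : wlen (embY X v₀ * qword X l τ v) =
      wlen v₀ + (l + ∑ i ∈ Finset.range l, wlen (v i)))
    (hconj : ∃ γ ∈ Hgrp X R,
      γ * toMY X R (embY X u₀ * qword X k σ u) * γ⁻¹ =
        toMY X R (embY X v₀ * qword X l τ v)) :
    k = l ∧ ∀ i < k, σ i = τ i := by
  classical
  obtain ⟨γ, hγ, hγxy⟩ := hconj
  obtain ⟨g, p, s, hgxy⟩ := exists_twistHom_conj_of_mem_Hgrp hγ hγxy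
  have hskel : (List.range k).map (fun i => decide (σ i = 1)) =
      (List.range l).map fun i => decide (τ i = 1) := by
    rw [← qsk_twistHom_of_wlen p s hσ hxred, ← qsk_conj_embY g, hgxy, qsk_embY_mul,
      qsk_qword hτ (isReduced_qwordList_of_wlen hτ hyred)]
  obtain rfl : k = l := by simpa using congrArg List.length hskel
  refine ⟨rfl, fun i hi => ?_⟩
  rw [List.map_inj_left] at hskel
  exact (decide_eq_decide_iff_of_sign (hσ i hi) (hτ i hi)).1 (hskel i (List.mem_range.2 hi))

open Miller in
/-- Suppose `x = u₀q^{σ₁}u₁q^{σ₂}⋯q^{σ_k}u_k` and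
`y = v₀q^{ε₁}v₁q^{ε₂}⋯q^{ε_ℓ}v_ℓ` (here `0`-indexed: `σ_{i+1} = σ i`, `u_{i+1} = u i`),
where the `u_i` and `v_i` are words on `X`, `σ_i, ε_i ∈ {±1}`, and both words are freely
and cyclically reduced. If `x ≈ y` in the Miller machine `M(G)` (conjugate via an element
of `⟨X ∪ Θ⟩`), then `k = ℓ` and `σ_i = ε_i` for all `i`. -/
theorem statement11 (X : Type) [Fintype X] (R : Finset (FreeGroup X)) (hR : R.Nonempty)
    (k l : ℕ) (σ τ : ℕ → ℤ) (hσ : IsSgn k σ) (hτ : IsSgn l τ)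
    (u₀ v₀ : FreeGroup X) (u v : ℕ → FreeGroup X)
    (hxred : wlen (embY X u₀ * qword X k σ u) =
      wlen u₀ + (k + ∑ i ∈ Finset.range k, wlen (u i)))
    (hyred : wlen (embY X v₀ * qword X l τ v) =
      wlen v₀ + (l + ∑ i ∈ Finset.range l, wlen (v i)))
    (hxcyc : CyclRed (embY X u₀ * qword X k σ u))
    (hycyc : CyclRed (embY X v₀ * qword X l τ v))
    (hconj : ∃ γ ∈ Hgrp X R,
      γ * toMY X R (embY X u₀ * qword X k σ u) * γ⁻¹ =
        toMY X R (embY X v₀ * qword X l τ v)) :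
    k = l ∧ ∀ i < k, σ i = τ i :=
  statement11_general X R k l σ τ hσ hτ u₀ v₀ u v hxred hyred hconj
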